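/- The number of remaining residue classes modulo 2^10 = 1024 for 10 iterations, i.e., the cardinality of {r : 0 ≤ r < 1024 and for all natural numbers n ≡ r (mod 1024) and all j with 1 ≤ j ≤ 10, T^[j](n) ≥ n}, is exactly 64. -/
import Mathlib

set_option maxRecDepth 100000

/-- The Collatz T-function: T(n) = n/2 if n is even, (3n+1)/2 if n is odd. -/
def collatzT (n : ℕ) : ℕ := if n % 2 = 0 then n / 2 else (3 * n + 1) / 2

def collatzM (a : ℕ) : ℕ := if a % 2 = 0 then 1 else 3

def collatzW : ℕ → ℕ → ℕ
  | 0, _ => 1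
  | j + 1, a => collatzM a * collatzW j (collatzT a)

def collatzP (r : ℕ) : Bool :=
  (List.range 10).all fun i =>
    decide (r ≤ collatzT^[i + 1] r) &&
    decide (1024 ≤ collatzW (i + 1) r * 2 ^ (10 - (i + 1)))

lemma collatzP_iff (r : ℕ) : collatzP r = true ↔
    ∀ j : ℕ, 1 ≤ j → j ≤ 10 →
      r ≤ collatzT^[j] r ∧ 1024 ≤ collatzW j r * 2 ^ (10 - j) := by
  simp only [collatzP, List.all_eq_true, List.mem_range, Bool.and_eq_true,
    decide_eq_true_eq]
  constructor
  · intro h j hj1 hj2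
    have hj : j - 1 + 1 = j := by omega
    have := h (j - 1) (by omega)
    rwa [hj] at this
  · intro h i hi
    exact h (i + 1) (by omega) (by omega)

lemma collatzT_add (a b k : ℕ) :
    collatzT (a + 2 ^ (k + 1) * b) = collatzT a + collatzM a * (2 ^ k * b) := by
  have h2 : 2 ^ (k + 1) * b = 2 * (2 ^ k * b) := by ring
  rw [h2]
  set c := 2 ^ k * b with hc
  simp only [collatzT, collatzM]
  split_ifs <;> omega

lemma collatzT_iterate_add (j : ℕ) : ∀ k a b : ℕ, j ≤ k →
    collatzT^[j] (a + 2 ^ k * b) =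
      collatzT^[j] a + collatzW j a * (2 ^ (k - j) * b) := by
  induction j with
  | zero => intro k a b _; simp [collatzW]
  | succ j ih =>
    intro k a b hk
    obtain ⟨k', rfl⟩ : ∃ k', k = k' + 1 := ⟨k - 1, by omega⟩
    rw [Function.iterate_succ_apply, Function.iterate_succ_apply,
      collatzT_add]
    have h1 : collatzT a + collatzM a * (2 ^ k' * b) =
        collatzT a + 2 ^ k' * (collatzM a * b) := by ring
    rw [h1, ih k' (collatzT a) (collatzM a * b) (by omega)]
    have h2 : k' + 1 - (j + 1) = k' - j := by omega
    rw [h2]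
    simp only [collatzW]
    ring

theorem collatz_remaining_classes_count_mod_1024 :
    {r : ℕ | r < 1024 ∧ ∀ n : ℕ, n % 1024 = r → ∀ j : ℕ, 1 ≤ j → j ≤ 10 →
      n ≤ collatzT^[j] n}.ncard = 64 := by
  have h1024 : (1024 : ℕ) = 2 ^ 10 := by norm_num
  have hset : {r : ℕ | r < 1024 ∧ ∀ n : ℕ, n % 1024 = r → ∀ j : ℕ, 1 ≤ j → j ≤ 10 →
      n ≤ collatzT^[j] n} =
      ↑((Finset.range 1024).filter (fun r : ℕ => collatzP r = true)) := by
    ext r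
    simp only [Set.mem_setOf_eq, Finset.coe_filter, Finset.mem_range,
      Set.mem_setOf_eq, collatzP_iff]
    constructor
    · rintro ⟨hr, h⟩
      refine ⟨hr, fun j hj1 hj2 => ?_⟩
      have hrr : r % 1024 = r := Nat.mod_eq_of_lt hr
      refine ⟨h r hrr j hj1 hj2, ?_⟩
      by_contra hlt
      push_neg at hlt
      set b := collatzT^[j] r + 1 with hb
      have hn : (r + 2 ^ 10 * b) % 1024 = r := by
        rw [h1024] at hr ⊢
        omega
      have hle := h (r + 2 ^ 10 * b) hn j hj1 hj2
      rw [collatzT_iterate_add j 10 r b hj2] at hle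
      have hw : collatzW j r * (2 ^ (10 - j) * b) =
          (collatzW j r * 2 ^ (10 - j)) * b := by ring
      rw [hw] at hle
      have : (collatzW j r * 2 ^ (10 - j)) * b ≤ 1023 * b :=
        Nat.mul_le_mul_right b (by omega)
      omega
    · rintro ⟨hr, h⟩
      refine ⟨hr, fun n hn j hj1 hj2 => ?_⟩
      obtain ⟨hle, hw⟩ := h j hj1 hj2
      have hdecomp : n = r + 2 ^ 10 * (n / 1024) := by
        rw [h1024] at *
        omega
      rw [hdecomp, collatzT_iterate_add j 10 r (n / 1024) hj2]
      have h3 : collatzW j r * (2 ^ (10 - j) * (n / 1024)) =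
          (collatzW j r * 2 ^ (10 - j)) * (n / 1024) := by ring
      rw [h3]
      have : 2 ^ 10 * (n / 1024) ≤ (collatzW j r * 2 ^ (10 - j)) * (n / 1024) :=
        Nat.mul_le_mul_right _ (by omega)
      omega
  rw [hset, Set.ncard_coe_finset]
  decide
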